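/- The limit as t → i (along |t| < 1) of the Mehler kernel K_t(x,y) = [π(1-t²)]^{-1/2} exp((4xyt - (x²+y²)(1+t²))/(2(1-t²))) equals e^{ixy}/√(2π), for all real x, y. -/
import Mathlib


open Filter Topology Complex

/-- The Mehler kernel `K_t(x,y) = [π(1-t²)]^{-1/2}
  exp((4xyt - (x²+y²)(1+t²))/(2(1-t²)))` for complex `t`. -/
noncomputable def mehlerKernel (t : ℂ) (x y : ℝ) : ℂ :=
  ((Real.pi : ℂ) * (1 - t ^ 2)) ^ (-(1 : ℂ) / 2) *
    Complex.exp ((4 * x * y * t - (x ^ 2 + y ^ 2) * (1 + t ^ 2)) / (2 * (1 - t ^ 2)))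

lemma mehlerKernel_at_I (x y : ℝ) :
    mehlerKernel Complex.I x y
      = Complex.exp (Complex.I * x * y) / (Real.sqrt (2 * Real.pi) : ℂ) := by
  unfold mehlerKernel
  have hI : (Complex.I : ℂ) ^ 2 = -1 := Complex.I_sq
  have h1 : (1 : ℂ) - Complex.I ^ 2 = 2 := by rw [hI]; ring
  have h2 : (4 * (x:ℂ) * y * Complex.I - ((x:ℂ) ^ 2 + y ^ 2) * (1 + Complex.I ^ 2))
      / (2 * (1 - Complex.I ^ 2)) = Complex.I * x * y := by
    rw [hI]; ring_nf
  rw [h2, h1]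
  have hπ : (0:ℝ) ≤ Real.pi * 2 := by positivity
  have hcpow : ((Real.pi : ℂ) * 2) ^ (-(1 : ℂ) / 2)
      = ((Real.pi * 2) ^ (-(1:ℝ) / 2) : ℝ) := by
    rw [show ((Real.pi : ℂ) * 2) = ((Real.pi * 2 : ℝ) : ℂ) by push_cast; ring,
      show (-(1:ℂ)/2) = ((-(1:ℝ)/2 : ℝ) : ℂ) by norm_num]
    rw [← Complex.ofReal_cpow hπ]
  rw [hcpow]
  have : (Real.pi * 2) ^ (-(1:ℝ) / 2) = 1 / Real.sqrt (2 * Real.pi) := by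
    rw [show (-(1:ℝ)/2) = -(1/2) by norm_num, Real.rpow_neg hπ,
      ← Real.sqrt_eq_rpow, mul_comm Real.pi 2]
    rw [one_div]
  rw [this]
  push_cast
  ring

/-- As `t → i` inside the unit disc, the Mehler kernel tends to `e^{ixy}/√(2π)`. -/
theorem mehlerKernel_tendsto_I (x y : ℝ) :
    Tendsto (fun t : ℂ => mehlerKernel t x y)
      (nhdsWithin Complex.I {t : ℂ | ‖t‖ < 1})
      (nhds (Complex.exp (Complex.I * x * y) / (Real.sqrt (2 * Real.pi) : ℂ))) := by
  have h1 : (1 : ℂ) - Complex.I ^ 2 = 2 := by rw [Complex.I_sq]; ring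
  have hc : ContinuousAt (fun t : ℂ => mehlerKernel t x y) Complex.I := by
    unfold mehlerKernel
    apply ContinuousAt.mul
    · apply ContinuousAt.cpow
      · fun_prop
      · fun_prop
      · rw [h1]
        exact Or.inl (by norm_num [Real.pi_pos])
    · apply ContinuousAt.cexp
      apply ContinuousAt.div
      · fun_prop
      · fun_prop
      · rw [h1]; norm_num
  rw [← mehlerKernel_at_I x y]
  exact hc.continuousWithinAt.tendsto
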